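/- Let μ_T, μ_W ∈ ℝ^d be i.i.d. N(0, τ²·I_d), let x = μ_T + ξ with ξ ~ N(0, σ²·I_d) independent, and let ρ = (1+2τ²/σ²)/(1+τ²/σ²)². Then for any ε₀ > 0, if d > 4·log(1/ε₀)/log(1/ρ), then Pr(‖x − μ_W‖² ≤ ‖x − μ_T‖²) ≤ ε₀. -/

import Mathlib

/-!
Chernoff bound with parameter `t = 1 / (4σ²)`. Writing `a = μ_T`, `b = μ_W`, `c = ξ`, the event is
`S := ∑ᵢ ((aᵢ - bᵢ)² + 2 (aᵢ - bᵢ) cᵢ) ≤ 0`, so its probability is at most `E[exp (-t S)]`, which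
factorises over the `d` independent coordinates. In one coordinate, integrating out `c` gives
`exp (-t w² + 2 t² σ² w²)` with `w = a - b`, and `t = 1 / (4σ²)` minimises this to
`exp (-w² / (8σ²))`; the Gaussian integrals over `b` and then `a` leave `(1 + τ² / (2σ²))^(-1/2)`.
Since `(1 + τ² / (2σ²))^(-2) ≤ ρ`, the bound is at most `ρ^(d/4) < ε₀`.
-/

open MeasureTheory ProbabilityTheory Real
open scoped ENNReal NNReal

lemma lintegral_ofReal_exp_neg_mul_sq_add {p : ℝ} (hp : 0 < p) (q r : ℝ) :
    ∫⁻ z, ENNReal.ofReal (exp (-p * z ^ 2 + q * z + r))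
      = ENNReal.ofReal (√(π / p) * exp (q ^ 2 / (4 * p) + r)) := by
  have hsq : ∀ z, -p * z ^ 2 + q * z + r = -p * (z - q / (2 * p)) ^ 2 + (q ^ 2 / (4 * p) + r) :=
    fun z => by field_simp; ring
  simp_rw [hsq, exp_add]
  rw [← ofReal_integral_eq_lintegral_ofReal, integral_mul_const,
    integral_sub_right_eq_self (fun z => exp (-p * z ^ 2)), integral_gaussian]
  · exact ((integrable_exp_neg_mul_sq hp).comp_sub_right _).mul_const _
  · exact ae_of_all _ fun z => by positivity

lemma lintegral_ofReal_exp_quadratic_gaussianReal {v : ℝ≥0} {α : ℝ} (hα : 2 * v * α < 1)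
    (β γ : ℝ) :
    ∫⁻ z, ENNReal.ofReal (exp (α * z ^ 2 + β * z + γ)) ∂gaussianReal 0 v
      = ENNReal.ofReal (exp (v * β ^ 2 / (2 * (1 - 2 * v * α)) + γ) / √(1 - 2 * v * α)) := by
  rcases eq_or_ne v 0 with rfl | hv
  · simp [gaussianReal_zero_var]
  have hv₀ : (0 : ℝ) < v := by positivity
  set p := 1 / (2 * v) - α with hp_def
  have hvp : 2 * v * p = 1 - 2 * v * α := by rw [hp_def]; field_simp
  have hp : 0 < p := by nlinarith
  have hdensity : ∀ z, gaussianPDF 0 v z * ENNReal.ofReal (exp (α * z ^ 2 + β * z + γ))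
      = ENNReal.ofReal (√(2 * π * v))⁻¹ * ENNReal.ofReal (exp (-p * z ^ 2 + β * z + γ)) := by
    intro z
    rw [gaussianPDF, gaussianPDFReal, ENNReal.ofReal_mul (by positivity), mul_assoc,
      ← ENNReal.ofReal_mul (by positivity), ← exp_add]
    congr 3
    rw [hp_def]; field_simp; ring
  rw [gaussianReal_of_var_ne_zero _ hv,
    lintegral_withDensity_eq_lintegral_mul _ (measurable_gaussianPDF 0 v) (by fun_prop)]
  simp_rw [Pi.mul_apply, hdensity]
  rw [lintegral_const_mul' _ _ ENNReal.ofReal_ne_top, lintegral_ofReal_exp_neg_mul_sq_add hp,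
    ← ENNReal.ofReal_mul (by positivity)]
  congr 1
  have hsqrt : (√(2 * π * v))⁻¹ * √(π / p) = (√(1 - 2 * v * α))⁻¹ := by
    rw [← sqrt_inv, ← sqrt_mul (by positivity), ← sqrt_inv, ← hvp]
    congr 1; field_simp
  rw [← mul_assoc, hsqrt, ← hvp, mul_comm, div_eq_mul_inv]
  congr 3
  field_simp
  ring

lemma lintegral_ofReal_exp_neg_sq_sub_div_gaussianReal {s : ℝ} (hs : 0 < s) (v : ℝ≥0) (a : ℝ) :
    ∫⁻ b, ENNReal.ofReal (exp (-(a - b) ^ 2 / (2 * s))) ∂gaussianReal 0 v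
      = ENNReal.ofReal (√(s / (s + v)) * exp (-a ^ 2 / (2 * (s + v)))) := by
  have hsv : 0 < s + v := by positivity
  calc _ = ∫⁻ b, ENNReal.ofReal (exp (-(2 * s)⁻¹ * b ^ 2 + a / s * b + -a ^ 2 / (2 * s)))
        ∂gaussianReal 0 v := lintegral_congr fun b => by congr 2; field_simp; ring
    _ = _ := by
      have : 0 ≤ 2 * v * (2 * s)⁻¹ := by positivity
      have hsv' : 1 - 2 * v * -(2 * s)⁻¹ = (s + v) / s := by field_simp; ring
      rw [lintegral_ofReal_exp_quadratic_gaussianReal (by rw [mul_neg]; linarith), hsv',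
        div_eq_mul_inv, mul_comm, ← sqrt_inv, inv_div]
      congr 3
      field_simp
      ring

lemma lintegral_fintype_prod_eq_prod {ι : Type*} [Fintype ι] {E : ι → Type*}
    [∀ i, MeasurableSpace (E i)] (μ : (i : ι) → Measure (E i)) [∀ i, IsProbabilityMeasure (μ i)]
    (f : (i : ι) → E i → ℝ≥0∞) (hf : ∀ i, Measurable (f i)) :
    ∫⁻ x, ∏ i, f i (x i) ∂Measure.pi μ = ∏ i, ∫⁻ y, f i y ∂μ i := by
  rw [lintegral_prod_eq_prod_lintegral_of_indepFun _ _
    (iIndepFun_pi fun i => (hf i).aemeasurable) fun i => (hf i).comp (measurable_pi_apply i)]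
  exact Finset.prod_congr rfl fun i _ => (measurePreserving_eval μ i).lintegral_comp (hf i)

lemma lintegral_prod_pi_prod_eq_pow {ι α β γ : Type*} [Fintype ι] [MeasurableSpace α]
    [MeasurableSpace β] [MeasurableSpace γ] (μ : Measure α) (ν : Measure β) (κ : Measure γ)
    [IsProbabilityMeasure μ] [IsProbabilityMeasure ν] [IsProbabilityMeasure κ]
    (g : (α × β) × γ → ℝ≥0∞) (hg : Measurable g) :
    ∫⁻ y, ∏ i, g ((y.1.1 i, y.1.2 i), y.2 i)
        ∂(((Measure.pi fun _ : ι => μ).prod (Measure.pi fun _ => ν)).prod (Measure.pi fun _ => κ))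
      = (∫⁻ p, g p ∂(μ.prod ν).prod κ) ^ Fintype.card ι := by
  have e := ((measurePreserving_arrowProdEquivProdArrow α β ι (fun _ => μ) (fun _ => ν)).prod
    (MeasurePreserving.id (Measure.pi fun _ : ι => κ))).comp
    (measurePreserving_arrowProdEquivProdArrow (α × β) γ ι (fun _ => μ.prod ν) (fun _ => κ))
  rw [← e.lintegral_comp (by fun_prop), ← Finset.card_univ, ← Finset.prod_const]
  exact lintegral_fintype_prod_eq_prod _ (fun _ => g) fun _ => hg

lemma map_prodMk_prodMk_eq_prod_of_iIndepFun {Ω β : Type*} [MeasurableSpace Ω]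
    [MeasurableSpace β] {P : Measure Ω} {X Y Z : Ω → β} (h : iIndepFun ![X, Y, Z] P)
    (hX : AEMeasurable X P) (hY : AEMeasurable Y P) (hZ : AEMeasurable Z P) :
    P.map (fun ω => ((X ω, Y ω), Z ω)) = ((P.map X).prod (P.map Y)).prod (P.map Z) := by
  have := h.isProbabilityMeasure
  have hXYZ : ∀ i, AEMeasurable (![X, Y, Z] i) P := fun i => by fin_cases i <;> assumption
  have hXY : IndepFun X Y P := h.indepFun (i := 0) (j := 1) (by decide)
  have hXY_Z : IndepFun (fun ω => (X ω, Y ω)) Z P :=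
    h.indepFun_prodMk₀ hXYZ 0 1 2 (by decide) (by decide)
  rw [(indepFun_iff_map_prod_eq_prod_map_map (hX.prodMk hY) hZ).1 hXY_Z,
    (indepFun_iff_map_prod_eq_prod_map_map hX hY).1 hXY]

noncomputable def chernoffWeight (σ : ℝ) (p : (ℝ × ℝ) × ℝ) : ℝ≥0∞ :=
  ENNReal.ofReal (exp (-((p.1.1 - p.1.2) ^ 2 + 2 * (p.1.1 - p.1.2) * p.2) / (4 * σ ^ 2)))

lemma measurable_chernoffWeight (σ : ℝ) : Measurable (chernoffWeight σ) := by
  unfold chernoffWeight; fun_prop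

lemma one_le_prod_chernoffWeight_of_sum_sq_le {ι : Type*} [Fintype ι] {a b c x : ι → ℝ} (σ : ℝ)
    (hx : ∀ i, x i = a i + c i) (h : ∑ i, (x i - b i) ^ 2 ≤ ∑ i, (x i - a i) ^ 2) :
    1 ≤ ∏ i, chernoffWeight σ ((a i, b i), c i) := by
  have hgap : ∑ i, ((a i - b i) ^ 2 + 2 * (a i - b i) * c i)
      = ∑ i, (x i - b i) ^ 2 - ∑ i, (x i - a i) ^ 2 := by
    rw [← Finset.sum_sub_distrib]
    exact Finset.sum_congr rfl fun i _ => by rw [hx]; ring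
  simp only [chernoffWeight]
  rw [← ENNReal.ofReal_prod_of_nonneg fun i _ => (exp_pos _).le, ← exp_sum, ENNReal.one_le_ofReal,
    one_le_exp_iff, ← Finset.sum_div, Finset.sum_neg_distrib, hgap]
  exact div_nonneg (by linarith) (by positivity)

lemma lintegral_chernoffWeight (τ : ℝ) {σ : ℝ} (hσ : 0 < σ) :
    ∫⁻ p, chernoffWeight σ p ∂(((gaussianReal 0 (τ ^ 2).toNNReal).prod
        (gaussianReal 0 (τ ^ 2).toNNReal)).prod (gaussianReal 0 (σ ^ 2).toNNReal))
      = ENNReal.ofReal (√(1 + τ ^ 2 / (2 * σ ^ 2)))⁻¹ := by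
  have hτ₂ : ((τ ^ 2).toNNReal : ℝ) = τ ^ 2 := Real.coe_toNNReal _ (sq_nonneg τ)
  have hσ₂ : ((σ ^ 2).toNNReal : ℝ) = σ ^ 2 := Real.coe_toNNReal _ (sq_nonneg σ)
  have hσ₀ : 0 < 4 * σ ^ 2 := by positivity
  have hc : ∀ w, ∫⁻ c, ENNReal.ofReal (exp (-(w ^ 2 + 2 * w * c) / (4 * σ ^ 2)))
        ∂gaussianReal 0 (σ ^ 2).toNNReal = ENNReal.ofReal (exp (-w ^ 2 / (2 * (4 * σ ^ 2)))) := by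
    intro w
    calc _ = ∫⁻ c, ENNReal.ofReal (exp (0 * c ^ 2 + (-w / (2 * σ ^ 2)) * c + -w ^ 2 / (4 * σ ^ 2)))
          ∂gaussianReal 0 (σ ^ 2).toNNReal :=
          lintegral_congr fun c => by congr 2; field_simp; ring
      _ = _ := by
          rw [lintegral_ofReal_exp_quadratic_gaussianReal (by simp), hσ₂, mul_zero, sub_zero,
            sqrt_one, div_one]
          congr 2
          field_simp; ring
  have ha := lintegral_ofReal_exp_neg_sq_sub_div_gaussianReal
    (by positivity : 0 < 4 * σ ^ 2 + τ ^ 2) (τ ^ 2).toNNReal 0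
  simp only [zero_sub, neg_sq, hτ₂, zero_pow two_ne_zero, neg_zero, zero_div, exp_zero,
    mul_one] at ha
  rw [lintegral_prod _ (measurable_chernoffWeight σ).aemeasurable]
  simp_rw [chernoffWeight, hc]
  rw [lintegral_prod _ (by fun_prop)]
  simp_rw [lintegral_ofReal_exp_neg_sq_sub_div_gaussianReal hσ₀, hτ₂,
    ENNReal.ofReal_mul (sqrt_nonneg _)]
  rw [lintegral_const_mul' _ _ ENNReal.ofReal_ne_top, ha, ← ENNReal.ofReal_mul (by positivity),
    ← sqrt_mul (by positivity), ← sqrt_inv]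
  congr 2
  field_simp
  ring

lemma pow_le_of_log_div_log_lt {K ρ ε : ℝ} (hK : 0 < K) (hKρ : K ^ 4 ≤ ρ) (hρ : ρ < 1)
    (hε : 0 < ε) {d : ℕ} (hd : 4 * log (1 / ε) / log (1 / ρ) < d) : K ^ d ≤ ε := by
  have hρ₀ : 0 < ρ := (pow_pos hK 4).trans_le hKρ
  have hd' : 4 * log (1 / ε) < d * log (1 / ρ) :=
    (div_lt_iff₀ (log_pos (one_lt_one_div hρ₀ hρ))).1 hd
  have hρK : 4 * log K ≤ log ρ := by
    simpa [log_pow] using log_le_log (pow_pos hK 4) hKρ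
  rw [one_div, log_inv, one_div, log_inv] at hd'
  rw [← log_le_log_iff (pow_pos hK d) hε, log_pow]
  nlinarith [mul_le_mul_of_nonneg_left hρK (Nat.cast_nonneg d)]

lemma inv_sqrt_pow_le_of_log_div_log_lt {u ε : ℝ} (hu : 0 < u) (hε : 0 < ε) {d : ℕ}
    (hd : 4 * log (1 / ε) / log (1 / ((1 + 2 * u) / (1 + u) ^ 2)) < d) :
    (√(1 + u / 2))⁻¹ ^ d ≤ ε := by
  refine pow_le_of_log_div_log_lt (by positivity) ?_ ?_ hε hd
  · rw [inv_pow, show 4 = 2 * 2 by rfl, pow_mul, sq_sqrt (by positivity),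
      inv_le_iff_one_le_mul₀ (by positivity), div_mul_eq_mul_div, one_le_div (by positivity)]
    nlinarith [pow_pos hu 3]
  · rw [div_lt_one (by positivity)]
    nlinarith

theorem stmt_7 {Ω : Type*} [MeasurableSpace Ω] (P : Measure Ω) [IsProbabilityMeasure P]
    (d : ℕ) (τ σ : ℝ) (hτ : 0 < τ) (hσ : 0 < σ)
    (μT μW ξ : Ω → (Fin d → ℝ))
    (hμT : Measure.map μT P = Measure.pi fun _ => gaussianReal 0 (τ ^ 2).toNNReal)
    (hμW : Measure.map μW P = Measure.pi fun _ => gaussianReal 0 (τ ^ 2).toNNReal)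
    (hξ : Measure.map ξ P = Measure.pi fun _ => gaussianReal 0 (σ ^ 2).toNNReal)
    (hindep : iIndepFun ![μT, μW, ξ] P)
    (x : Ω → Fin d → ℝ) (hx : ∀ ω i, x ω i = μT ω i + ξ ω i)
    (ε₀ : ℝ) (hε₀ : 0 < ε₀)
    (hd : (d : ℝ) >
      4 * Real.log (1 / ε₀) /
        Real.log (1 / ((1 + 2 * τ ^ 2 / σ ^ 2) / (1 + τ ^ 2 / σ ^ 2) ^ 2))) :
    (P {ω | ∑ i, (x ω i - μW ω i) ^ 2 ≤ ∑ i, (x ω i - μT ω i) ^ 2}).toReal ≤ ε₀ := by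
  have hAE {X : Ω → Fin d → ℝ} {v : ℝ≥0} (h : P.map X = Measure.pi fun _ => gaussianReal 0 v) :
      AEMeasurable X P :=
    AEMeasurable.of_map_ne_zero (by rw [h]; exact IsProbabilityMeasure.ne_zero _)
  have hμ := (hAE hμT).prodMk (hAE hμW) |>.prodMk (hAE hξ)
  have hlaw := map_prodMk_prodMk_eq_prod_of_iIndepFun hindep (hAE hμT) (hAE hμW) (hAE hξ)
  rw [hμT, hμW, hξ] at hlaw
  let G : ((Fin d → ℝ) × (Fin d → ℝ)) × (Fin d → ℝ) → ℝ≥0∞ := fun y =>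
    ∏ i, chernoffWeight σ ((y.1.1 i, y.1.2 i), y.2 i)
  have hG : Measurable G := by have := measurable_chernoffWeight σ; fun_prop
  have hchernoff : P {ω | ∑ i, (x ω i - μW ω i) ^ 2 ≤ ∑ i, (x ω i - μT ω i) ^ 2}
      ≤ ∫⁻ ω, G ((μT ω, μW ω), ξ ω) ∂P := by
    refine (measure_mono fun ω hω => ?_).trans
      (by simpa using mul_meas_ge_le_lintegral₀ (hG.comp_aemeasurable hμ) 1)
    exact one_le_prod_chernoffWeight_of_sum_sq_le σ (hx ω) hω
  have hmoment : ∫⁻ ω, G ((μT ω, μW ω), ξ ω) ∂P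
      = ENNReal.ofReal ((√(1 + τ ^ 2 / σ ^ 2 / 2))⁻¹ ^ d) := by
    rw [← lintegral_map' hG.aemeasurable hμ, hlaw,
      lintegral_prod_pi_prod_eq_pow _ _ _ _ (measurable_chernoffWeight σ),
      lintegral_chernoffWeight τ hσ, Fintype.card_fin, ENNReal.ofReal_pow (by positivity)]
    congr 4; ring
  refine ENNReal.toReal_le_of_le_ofReal hε₀.le ((hchernoff.trans hmoment.le).trans ?_)
  refine ENNReal.ofReal_le_ofReal (inv_sqrt_pow_le_of_log_div_log_lt (by positivity) hε₀ ?_)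
  convert hd using 5; ring
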